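/- Let A be a nonzero linear ID-primitive differential polynomial in (G₀) with |G₀| = c(A) + 1. Then for j = 0,1,…,c(A) there exist differential operators 𝓓_j ∈ K[∂] with deg(𝓓_j) = j such that G₀ = {B_0 = 𝓓_0(A), B_1 = 𝓓_1(A), …, B_{c(A)} = 𝓓_{c(A)}(A)}. -/

import Mathlib

open MvPolynomial

namespace DPPE

/-- Differential variables: `(Sum.inl i, k)` is the `k`-th derivative of `xᵢ`;
`(Sum.inr j, k)` is the `k`-th derivative of `uⱼ`. -/
abbrev Vr (n : ℕ) := (Fin n ⊕ Fin (n - 1)) × ℕ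

/-- The differential polynomial ring `K{X ∪ U}`. -/
abbrev R (K : Type) [Field K] (n : ℕ) := MvPolynomial (Vr n) K

variable {K : Type} [Field K] {n : ℕ}

/-- The order of `f` in the differential indeterminate `v` (equal to `-1` if absent). -/
noncomputable def ordIn {A : Type} [CommSemiring A] (f : MvPolynomial (Vr n) A)
    (v : Fin n ⊕ Fin (n - 1)) : ℤ :=
  ((f.vars.filter (fun w => w.1 = v)).image (fun w => (w.2 : ℤ))).max.unbotD (-1)

/-- The (total) order of the differential polynomial `f`. -/
noncomputable def ordTot {A : Type} [CommSemiring A] (f : MvPolynomial (Vr n) A) : ℕ :=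
  (f.vars.image Prod.snd).max.unbotD 0

/-- `f` belongs to `K{X}`. -/
def xOnly {A : Type} [CommSemiring A] (f : MvPolynomial (Vr n) A) : Prop :=
  ∀ w ∈ f.vars, (w.1).isLeft

/-- `f` belongs to `K{U}`. -/
def uOnly {A : Type} [CommSemiring A] (f : MvPolynomial (Vr n) A) : Prop :=
  ∀ w ∈ f.vars, (w.1).isRight

/-- `f` is a linear (degree at most 1) differential polynomial. -/
def IsLinearPoly {A : Type} [CommSemiring A] (f : MvPolynomial (Vr n) A) : Prop :=
  f.totalDegree ≤ 1

/-- The coefficient of the `k`-th derivative of the indeterminate `v` in `f`. -/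
noncomputable def cf {A : Type} [CommSemiring A] (f : MvPolynomial (Vr n) A)
    (v : Fin n ⊕ Fin (n - 1)) (k : ℕ) : A :=
  MvPolynomial.coeff (Finsupp.single (v, k) 1) f

/-- An order embedding realizing the ranking `R*` on `X ∪ U` that eliminates `U` with
respect to `X`, orderly on each block, with `x_n < ⋯ < x_1` and `u_1 < ⋯ < u_{n-1}`. -/
def rkk (w : Vr n) : Lex (Bool × Lex (ℕ × ℕ)) :=
  toLex (Sum.elim (fun i => (false, toLex (w.2, (i.rev : ℕ))))
    (fun j => (true, toLex (w.2, (j : ℕ)))) w.1)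

/-- `v` is the lead (highest ranked derivative w.r.t. `R*`) of `g`. -/
def IsLead {A : Type} [CommSemiring A] (g : MvPolynomial (Vr n) A) (v : Vr n) : Prop :=
  v ∈ g.vars ∧ ∀ w ∈ g.vars, rkk w ≤ rkk v

/-- A system `𝒫(X,U)` of `n` linear differential polynomial parametric equations
`xᵢ = Pᵢ(U) = aᵢ - Hᵢ(U)` in `n-1` differential parameters, over an ordinary
differential field `(K, der)`;  `D` is the induced derivation on `K{X ∪ U}`.
`Fᵢ = xᵢ - aᵢ + Hᵢ(U)`. -/
structure Sys (K : Type) [Field K] (n : ℕ) where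
  hn : 2 ≤ n
  der : Derivation ℤ K K
  D : Derivation ℤ (R K n) (R K n)
  hD_C : ∀ c : K, D (C c) = C (der c)
  hD_X : ∀ (v : Fin n ⊕ Fin (n - 1)) (k : ℕ), D (X (v, k)) = X (v, k + 1)
  a : Fin n → K
  H : Fin n → R K n
  H_hom : ∀ i, (H i).IsHomogeneous 1
  H_u : ∀ i, uOnly (H i)
  H_ne : ∃ i, H i ≠ 0
  param : ∀ j : Fin (n - 1), ∃ i, 0 ≤ ordIn (H i) (Sum.inr j)

namespace Sys

/-- `Fᵢ = xᵢ - aᵢ + Hᵢ(U)`. -/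
noncomputable def F (S : Sys K n) (i : Fin n) : R K n :=
  X (Sum.inl i, 0) - C (S.a i) + S.H i

/-- `oᵢ = ord(Fᵢ)`. -/
noncomputable def o (S : Sys K n) (i : Fin n) : ℕ := ordTot (S.F i)

/-- `γⱼ = min_i (oᵢ - ord(Fᵢ, uⱼ))`. -/
noncomputable def gamZ (S : Sys K n) (j : Fin (n - 1)) : ℤ :=
  (Finset.univ : Finset (Fin n)).inf' ⟨⟨0, by have h := S.hn; omega⟩, Finset.mem_univ _⟩
    fun i => (S.o i : ℤ) - ordIn (S.F i) (Sum.inr j)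

noncomputable def gam (S : Sys K n) (j : Fin (n - 1)) : ℕ := (S.gamZ j).toNat

/-- `N = ∑ oᵢ`. -/
noncomputable def Nn (S : Sys K n) : ℕ := ∑ i, S.o i

/-- The completeness index `γ = ∑ γⱼ`. -/
noncomputable def gamT (S : Sys K n) : ℕ := ∑ j, S.gam j

/-- `L = ∑ (N - oᵢ - γ + 1)`. -/
noncomputable def L (S : Sys K n) : ℕ := ∑ i, (S.Nn - S.o i - S.gamT + 1)

/-- `Lʰ = ∑ (N - oᵢ - γ)`. -/
noncomputable def Lh (S : Sys K n) : ℕ := ∑ i, (S.Nn - S.o i - S.gamT)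

/-- The set `PS = {∂^k Fᵢ ∣ 0 ≤ k ≤ N - oᵢ - γ}`. -/
def PSset (S : Sys K n) : Set (R K n) :=
  {g | ∃ i k, k ≤ S.Nn - S.o i - S.gamT ∧ g = (⇑S.D)^[k] (S.F i)}

/-- `f` belongs to the polynomial subring `K[𝒳][𝒱]`. -/
def inXV (S : Sys K n) {A : Type} [CommSemiring A] (f : MvPolynomial (Vr n) A) : Prop :=
  ∀ w ∈ f.vars,
    Sum.elim (fun i => w.2 ≤ S.Nn - S.o i - S.gamT)
      (fun j => w.2 ≤ S.Nn - S.gam j - S.gamT) w.1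

/-- Membership in the ideal `(PS)` generated by `PS` in `K[𝒳][𝒱]`. -/
def PSIdealMem (S : Sys K n) (f : R K n) : Prop :=
  f ∈ Ideal.span S.PSset ∧ S.inXV f

/-- Substitution `x_{ik} ↦ ∂^k(Pᵢ(U))` defining the implicit ideal. -/
noncomputable def subst (S : Sys K n) : R K n →ₐ[K] R K n :=
  aeval fun w =>
    Sum.elim (fun i => (⇑S.D)^[w.2] (C (S.a i) - S.H i)) (fun j => X (Sum.inr j, w.2)) w.1

/-- Membership in the implicit ideal `ID = {f ∈ K{X} ∣ f(P₁(U),…,Pₙ(U)) = 0}`. -/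
def memID (S : Sys K n) (f : R K n) : Prop := xOnly f ∧ S.subst f = 0

/-- Membership in the differential ideal `[A]` of `K{X}` generated by `A ∈ K{X}`. -/
def memDiffSpanX (S : Sys K n) (A f : R K n) : Prop :=
  xOnly f ∧ f ∈ Ideal.span {g | ∃ k, g = (⇑S.D)^[k] A}

/-- `dim ID = n - 1`: the implicit ideal has a characteristic set `{A}` with `A`
a nonzero linear differential polynomial, i.e. `ID = [A]`. -/
def DimFull (S : Sys K n) : Prop :=
  ∃ A : R K n, A ≠ 0 ∧ IsLinearPoly A ∧ xOnly A ∧ ∀ f, (S.memID f ↔ S.memDiffSpanX A f)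

/-- The action of a linear differential operator `Lop = ∑ cₖ ∂^k ∈ K[∂]` on `f`. -/
noncomputable def applyOp (S : Sys K n) (Lop : Polynomial K) (f : R K n) : R K n :=
  ∑ k ∈ Lop.support, C (Lop.coeff k) * (⇑S.D)^[k] f

/-- `Lop` is a left divisor of `Fop` in `K[∂]`. -/
def leftDvd (S : Sys K n) (Lop Fop : Polynomial K) : Prop :=
  ∃ Mop : Polynomial K, ∀ f : R K n, S.applyOp Fop f = S.applyOp Lop (S.applyOp Mop f)

/-- For `B ∈ ID` linear, written `B = ∑ 𝓕ᵢ(xᵢ - aᵢ)`: the operator `𝓕ᵢ ∈ K[∂]`. -/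
noncomputable def opOf (S : Sys K n) (B : R K n) (i : Fin n) : Polynomial K :=
  ∑ k ∈ Finset.range (ordTot B + 1), Polynomial.monomial k (cf B (Sum.inl i) k)

/-- `B` is `ID`-primitive: the greatest common left divisor of `𝓕₁,…,𝓕ₙ` lies in `K`. -/
def IDPrimitive (S : Sys K n) (B : R K n) : Prop :=
  ∀ Lop : Polynomial K, (∀ i, S.leftDvd Lop (S.opOf B i)) → Lop.natDegree = 0

/-- `B'` is an `ID`-primitive part of `B`:  `𝓕ᵢ = IDcont(B)·𝓛ᵢ` with `𝓛₁,…,𝓛ₙ`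
coprime and `B' = ∑ 𝓛ᵢ(xᵢ - aᵢ)`. -/
def IsIDPrimPart (S : Sys K n) (B B' : R K n) : Prop :=
  ∃ (Lop : Polynomial K) (Lfam : Fin n → Polynomial K),
    (∀ i f, S.applyOp (S.opOf B i) f = S.applyOp Lop (S.applyOp (Lfam i) f)) ∧
    (∀ Q : Polynomial K, (∀ i, S.leftDvd Q (Lfam i)) → Q.natDegree = 0) ∧
    B' = ∑ i, S.applyOp (Lfam i) (X (Sum.inl i, 0) - C (S.a i))

/-- The co-order of `B` in `(PS)`: the greatest `c` with `∂^c B ∈ (PS)`. -/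
noncomputable def coOrd (S : Sys K n) (B : R K n) : ℕ :=
  sSup {c : ℕ | S.PSIdealMem ((⇑S.D)^[c] B)}

/-- The leading coefficients vector `l(B) = (α₁,…,αₙ)`, `αᵢ` the coefficient of
`∂^{N - oᵢ - γ - c(B)}` in `𝓕ᵢ`. -/
noncomputable def lvec (S : Sys K n) (B : R K n) : Fin n → K :=
  fun i => cf B (Sum.inl i) (S.Nn - S.o i - S.gamT - S.coOrd B)

/-- The leading matrix `S` of the system: entry `(i,j)` is the coefficient of
`u_{n-j, oᵢ - γ_{n-j}}` in `Fᵢ`. -/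
noncomputable def Smat (S : Sys K n) : Matrix (Fin n) (Fin (n - 1)) K :=
  Matrix.of fun i j =>
    if S.gam j.rev ≤ S.o i then cf (S.F i) (Sum.inr j.rev) (S.o i - S.gam j.rev) else 0

/-- Row indices of the complete differential resultant matrix `M(L)`. -/
abbrev RI (S : Sys K n) := (i : Fin n) × Fin (S.Nn - S.o i - S.gamT + 1)

/-- Column indices corresponding to the variables `𝒱`. -/
abbrev CI (S : Sys K n) := (j : Fin (n - 1)) × Fin (S.Nn - S.gam j - S.gamT + 1)

/-- The principal matrix `M_{L-1}` of the system. -/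
noncomputable def Mprin (S : Sys K n) : Matrix S.RI S.CI K :=
  Matrix.of fun ik jm => cf ((⇑S.D)^[(ik.2 : ℕ)] (S.F ik.1)) (Sum.inr jm.1) (jm.2 : ℕ)

/-- The complete differential resultant matrix `M(L)` (last column holds the parts
`x_{ik} - ∂^k aᵢ`). -/
noncomputable def Mfull (S : Sys K n) : Matrix S.RI (S.CI ⊕ Unit) (R K n) :=
  Matrix.of fun ik c =>
    Sum.elim
      (fun jm => (C (cf ((⇑S.D)^[(ik.2 : ℕ)] (S.F ik.1)) (Sum.inr jm.1) (jm.2 : ℕ)) : R K n))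
      (fun _ => X (Sum.inl ik.1, (ik.2 : ℕ)) - C ((⇑S.der)^[(ik.2 : ℕ)] (S.a ik.1))) c

/-- The linear complete differential resultant `∂CRes(F₁,…,Fₙ) = det M(L)`. -/
noncomputable def dCRes (S : Sys K n) : R K n :=
  if h : Fintype.card (S.CI ⊕ Unit) = Fintype.card S.RI then
    (S.Mfull.submatrix (Fintype.equivOfCardEq h) id).det
  else 0

/-- `G` is the (reduced) Groebner basis associated to the system `𝒫(X,U)`,
w.r.t. the lex monomial order induced by the ranking `R*`. -/
def IsAssocGB (S : Sys K n) (G : Finset (R K n)) : Prop :=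
  (∀ g ∈ G, g ≠ 0 ∧ IsLinearPoly g ∧ S.inXV g ∧ g ∈ Ideal.span S.PSset) ∧
  Ideal.span (G : Set (R K n)) = Ideal.span S.PSset ∧
  (∀ g ∈ G, ∃ v : Vr n, IsLead g v ∧ cf g v.1 v.2 = 1 ∧ ∀ g' ∈ G, g' ≠ g → v ∉ g'.vars) ∧
  (∀ f : R K n, f ∈ Ideal.span S.PSset → S.inXV f → IsLinearPoly f → f ≠ 0 →
    ∃ g ∈ G, ∃ v : Vr n, IsLead g v ∧ IsLead f v)

end Sys

/-- `G₀ = G ∩ K{X}`. -/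
noncomputable def G0 (G : Finset (R K n)) : Finset (R K n) :=
  @Finset.filter _ (fun g => xOnly g) (Classical.decPred _) G

/-!
Let `x_{ι,κ}` be the lead of `A`. As `A` is linear, the lead of `∂^j A` is `x_{ι,κ+j}`, so
`𝓛(A)` has lead `x_{ι,κ+deg 𝓛}` and `𝓛 ↦ 𝓛(A)` is injective on `K[∂]`. The derivatives
`∂^j A`, `j ≤ c(A)`, vanish under the parametrization and stay within the orders allowed in
`K[𝒳][𝒱]` (because `∂^{c(A)} A` does), so they lie in `(PS)`; reducing them modulo `G` puts them in
the `K`-span of `G₀`. That span has dimension at most `|G₀| = c(A) + 1`, hence equals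
`{𝓛(A) : deg 𝓛 ≤ c(A)}`. Elements of the reduced basis `G₀` have distinct leads, so their
operators have distinct degrees in `{0, …, c(A)}`, and by counting every degree occurs.
-/

theorem cf_add (f g : R K n) (v : Fin n ⊕ Fin (n - 1)) (k : ℕ) :
    cf (f + g) v k = cf f v k + cf g v k := coeff_add _ _ _

theorem cf_sub (f g : R K n) (v : Fin n ⊕ Fin (n - 1)) (k : ℕ) :
    cf (f - g) v k = cf f v k - cf g v k := coeff_sub _ _ _ _

theorem cf_C_mul (c : K) (f : R K n) (v : Fin n ⊕ Fin (n - 1)) (k : ℕ) :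
    cf (C c * f) v k = c * cf f v k := coeff_C_mul _ _ _

theorem cf_sum {α : Type*} (s : Finset α) (F : α → R K n) (v : Fin n ⊕ Fin (n - 1)) (k : ℕ) :
    cf (∑ a ∈ s, F a) v k = ∑ a ∈ s, cf (F a) v k := coeff_sum _ _ _

theorem cf_C (c : K) (v : Fin n ⊕ Fin (n - 1)) (k : ℕ) : cf (C c : R K n) v k = 0 := by
  rw [cf, coeff_C, if_neg (Finsupp.single_ne_zero.2 one_ne_zero).symm]

theorem cf_mul_X (p : R K n) (w : Vr n) (v : Fin n ⊕ Fin (n - 1)) (k : ℕ) :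
    cf (p * X w) v k = if w = (v, k) then constantCoeff p else 0 := by
  classical
  simp only [cf, coeff_mul_X', Finsupp.support_single _ one_ne_zero, Finset.mem_singleton]
  split_ifs with h
  · rw [h, tsub_self, ← constantCoeff_eq]
  · rfl

theorem mem_vars_of_cf_ne_zero {f : R K n} {v : Fin n ⊕ Fin (n - 1)} {k : ℕ}
    (h : cf f v k ≠ 0) : (v, k) ∈ f.vars :=
  (mem_vars_iff_mem_support _).2 ⟨_, mem_support_iff.2 h, by simp⟩

theorem cf_eq_zero_of_notMem_vars {f : R K n} {v : Fin n ⊕ Fin (n - 1)} {k : ℕ}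
    (h : (v, k) ∉ f.vars) : cf f v k = 0 :=
  not_not.1 (mt mem_vars_of_cf_ne_zero h)

theorem vars_sub_C_mul_subset (f g : R K n) (c : K) : (f - C c * g).vars ⊆ f.vars ∪ g.vars := by
  classical
  intro w hw
  rcases Finset.mem_union.1 (vars_sub_subset (p := f) hw) with h | h
  · exact Finset.mem_union_left _ h
  · exact Finset.mem_union_right _ (by simpa using vars_mul _ _ h)

theorem exists_max_cf_ne_zero {f : R K n} {v : Fin n ⊕ Fin (n - 1)} (h : ∃ l, cf f v l ≠ 0) :
    ∃ d, cf f v d ≠ 0 ∧ ∀ l, d < l → cf f v l = 0 := by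
  have hfin : {l | cf f v l ≠ 0}.Finite :=
    (f.vars.image Prod.snd).finite_toSet.subset fun l hl =>
      Finset.mem_image.2 ⟨_, mem_vars_of_cf_ne_zero hl, rfl⟩
  obtain ⟨d, hd, hmax⟩ := Set.exists_max_image _ id hfin h
  exact ⟨d, hd, fun l hl => not_not.1 fun hne => (hmax l hne).not_gt hl⟩

namespace IsLinearPoly

variable {f g : R K n}

theorem eq_zero_or_eq_single (hf : IsLinearPoly f) {m : Vr n →₀ ℕ} (hm : m ∈ f.support) :
    m = 0 ∨ ∃ w, m = Finsupp.single w 1 := by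
  have hdeg : m.degree ≤ 1 := (le_totalDegree hm).trans hf
  rcases Nat.le_one_iff_eq_zero_or_eq_one.1 hdeg with h | h
  · exact Or.inl ((Finsupp.degree_eq_zero_iff m).1 h)
  · obtain ⟨w, hw⟩ : m ∈ Set.range (Finsupp.single · 1) := Finsupp.range_single_one ▸ h
    exact Or.inr ⟨w, hw.symm⟩

theorem cf_ne_zero_of_mem_vars (hf : IsLinearPoly f) {w : Vr n} (h : w ∈ f.vars) :
    cf f w.1 w.2 ≠ 0 := by
  obtain ⟨m, hm, hwm⟩ := (mem_vars_iff_mem_support w).1 h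
  rcases hf.eq_zero_or_eq_single hm with rfl | ⟨w', rfl⟩
  · simp at hwm
  · rw [Finsupp.support_single _ one_ne_zero, Finset.mem_singleton] at hwm
    subst hwm
    exact mem_support_iff.1 hm

theorem eq_C_add_sum (hf : IsLinearPoly f) :
    f = C (constantCoeff f) + ∑ w ∈ f.vars, C (cf f w.1 w.2) * X w := by
  classical
  ext m
  simp only [coeff_add, coeff_C, coeff_sum, coeff_C_mul, coeff_X, cf, mul_ite, mul_one,
    mul_zero]
  rcases eq_or_ne m 0 with rfl | hm0
  · simp [constantCoeff_eq]
  rw [if_neg hm0.symm, zero_add]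
  have hterm : ∀ w : Vr n, (if Finsupp.single w 1 = m then coeff (Finsupp.single (w.1, w.2) 1) f
      else 0) = if Finsupp.single w 1 = m then coeff m f else 0 := by
    intro w
    split_ifs with h
    · rw [← h]
    · rfl
  simp only [hterm]
  by_cases hm : m ∈ f.support
  · obtain ⟨w, rfl⟩ := (hf.eq_zero_or_eq_single hm).resolve_left hm0
    have hw : w ∈ f.vars := (mem_vars_iff_mem_support w).2 ⟨_, hm, by simp⟩
    rw [Finset.sum_eq_single_of_mem w hw fun u _ hu => if_neg fun h =>
      hu (Finsupp.single_left_injective one_ne_zero h), if_pos rfl]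
  · rw [notMem_support_iff.1 hm]
    simp

theorem add (hf : IsLinearPoly f) (hg : IsLinearPoly g) : IsLinearPoly (f + g) :=
  (totalDegree_add f g).trans (max_le hf hg)

theorem C_mul (c : K) (hf : IsLinearPoly f) : IsLinearPoly (C c * f) :=
  (totalDegree_mul _ _).trans (by rwa [totalDegree_C, zero_add])

theorem sub (hf : IsLinearPoly f) (hg : IsLinearPoly g) : IsLinearPoly (f - g) := by
  rw [sub_eq_add_neg, neg_eq_neg_one_mul, ← C_1, ← C_neg]
  exact hf.add (hg.C_mul _)

theorem sum {α : Type*} (s : Finset α) {F : α → R K n} (h : ∀ a ∈ s, IsLinearPoly (F a)) :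
    IsLinearPoly (∑ a ∈ s, F a) :=
  Finset.sum_induction F IsLinearPoly (fun _ _ => add) (by simp [IsLinearPoly]) h

end IsLinearPoly

theorem isLinearPoly_C_mul_X (c : K) (w : Vr n) : IsLinearPoly (C c * X w : R K n) :=
  IsLinearPoly.C_mul c (totalDegree_X w).le

theorem isLinearPoly_C (c : K) : IsLinearPoly (C c : R K n) := by
  simp [IsLinearPoly]

theorem rkk_inl (i : Fin n) (k : ℕ) :
    rkk (n := n) (Sum.inl i, k) = toLex (false, toLex (k, (i.rev : ℕ))) := rfl

theorem rkk_inr (j : Fin (n - 1)) (k : ℕ) :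
    rkk (n := n) (Sum.inr j, k) = toLex (true, toLex (k, (j : ℕ))) := rfl

theorem rkk_inl_le_inl_iff {i i' : Fin n} {k k' : ℕ} :
    rkk (n := n) (Sum.inl i, k) ≤ rkk (Sum.inl i', k') ↔
      k < k' ∨ (k = k' ∧ (i.rev : ℕ) ≤ (i'.rev : ℕ)) := by
  simp [rkk_inl, Prod.Lex.toLex_le_toLex]

theorem rkk_inl_lt_inr (i : Fin n) (j : Fin (n - 1)) (k m : ℕ) :
    rkk (n := n) (Sum.inl i, k) < rkk (Sum.inr j, m) := by
  simp [rkk_inl, rkk_inr, Prod.Lex.toLex_lt_toLex]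

theorem rkk_injective : Function.Injective (rkk (n := n)) := by
  rintro ⟨v | v, k⟩ ⟨v' | v', k'⟩ h <;>
    simp_all [rkk_inl, rkk_inr, Fin.val_inj]
  omega

theorem IsLead.unique {f : R K n} {v v' : Vr n} (h : IsLead f v) (h' : IsLead f v') : v = v' :=
  rkk_injective (le_antisymm (h'.2 v h.1) (h.2 v' h'.1))

theorem IsLead.xOnly {g : R K n} {i : Fin n} {k : ℕ} (h : IsLead g (Sum.inl i, k)) : xOnly g := by
  rintro ⟨_ | j, m⟩ hw
  · rfl
  · exact absurd (h.2 _ hw) (rkk_inl_lt_inr i j k m).not_ge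

theorem IsLead.cf_eq_zero_of_not_rkk_le {f : R K n} {v w : Vr n} (h : IsLead f v)
    (hw : ¬rkk w ≤ rkk v) : cf f w.1 w.2 = 0 :=
  cf_eq_zero_of_notMem_vars fun hm => hw (h.2 w hm)

theorem IsLead.cf_eq_zero_of_lt {f : R K n} {ι : Fin n} {κ : ℕ} (h : IsLead f (Sum.inl ι, κ))
    (i : Fin n) {l : ℕ} (hl : κ < l) : cf f (Sum.inl i) l = 0 :=
  h.cf_eq_zero_of_not_rkk_le (w := (Sum.inl i, l)) (by rw [rkk_inl_le_inl_iff]; omega)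

theorem IsLead.rkk_lt_of_mem_vars_sub {f g : R K n} {v : Vr n} (hf : IsLinearPoly f)
    (hg : IsLinearPoly g) (hfv : IsLead f v) (hgv : IsLead g v) (hg1 : cf g v.1 v.2 = 1) :
    ∀ w ∈ (f - C (cf f v.1 v.2) * g).vars, rkk w < rkk v := by
  intro w hw
  have hle : rkk w ≤ rkk v :=
    (Finset.mem_union.1 (vars_sub_C_mul_subset f g _ hw)).elim (hfv.2 w) (hgv.2 w)
  refine lt_of_le_of_ne hle fun h => ?_
  rw [rkk_injective h] at hw
  exact (hf.sub (hg.C_mul _)).cf_ne_zero_of_mem_vars hw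
    (by rw [cf_sub, cf_C_mul, hg1, mul_one, sub_self])

theorem exists_isLead_inl {f : R K n} (hx : xOnly f) (hf : f.vars.Nonempty) :
    ∃ ι κ, IsLead f (Sum.inl ι, κ) := by
  obtain ⟨⟨v, κ⟩, hw, hmax⟩ := Finset.exists_max_image f.vars rkk hf
  obtain ⟨ι, rfl⟩ := Sum.isLeft_iff.1 (hx _ hw)
  exact ⟨ι, κ, hw, hmax⟩

theorem mem_G0 {G : Finset (R K n)} {g : R K n} : g ∈ G0 G ↔ g ∈ G ∧ xOnly g := by
  classical
  simp [G0]

namespace Sys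

section

variable (S : Sys K n)

theorem iterate_D_X (v : Fin n ⊕ Fin (n - 1)) (k j : ℕ) :
    (⇑S.D)^[j] (X (v, k)) = X (v, k + j) := by
  induction j with
  | zero => rfl
  | succ j ih => rw [Function.iterate_succ_apply', ih, S.hD_X, add_assoc]

theorem constantCoeff_D (f : R K n) : constantCoeff (S.D f) = S.der (constantCoeff f) := by
  induction f using MvPolynomial.induction_on with
  | C a => rw [S.hD_C, constantCoeff_C, constantCoeff_C]
  | add p q hp hq => rw [map_add, map_add, hp, hq, map_add, map_add]
  | mul_X p w hp =>
    obtain ⟨v, k⟩ := w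
    rw [Derivation.leibniz, S.hD_X, smul_eq_mul, smul_eq_mul]
    simp

theorem cf_D (f : R K n) (v : Fin n ⊕ Fin (n - 1)) (k : ℕ) :
    cf (S.D f) v k = S.der (cf f v k) + if k = 0 then 0 else cf f v (k - 1) := by
  induction f using MvPolynomial.induction_on with
  | C a => simp [S.hD_C, cf_C]
  | add p q hp hq =>
    simp only [map_add, cf_add, hp, hq]
    split_ifs <;> ring
  | mul_X p w hp =>
    obtain ⟨u, m⟩ := w
    rw [Derivation.leibniz, S.hD_X, smul_eq_mul, smul_eq_mul, mul_comm (X _), cf_add, cf_mul_X,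
      cf_mul_X, constantCoeff_D, cf_mul_X, cf_mul_X]
    by_cases hu : u = v
    · subst hu
      rcases k with _ | k
      · by_cases hm : m = 0 <;> simp [hm]
      · by_cases hm : m = k + 1 <;> simp [hm]
    · simp [hu]

theorem cf_iterate_D_eq_zero {f : R K n} {v : Fin n ⊕ Fin (n - 1)} {d : ℕ}
    (h : ∀ l, d ≤ l → cf f v l = 0) (j : ℕ) {l : ℕ} (hl : d + j ≤ l) :
    cf ((⇑S.D)^[j] f) v l = 0 := by
  induction j generalizing l with
  | zero => exact h l hl
  | succ j ih =>
    rw [Function.iterate_succ_apply', cf_D, ih (by omega), map_zero, zero_add,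
      if_neg (by omega), ih (by omega)]

theorem cf_iterate_D_eq_zero_of_forall {f : R K n} {v : Fin n ⊕ Fin (n - 1)}
    (h : ∀ l, cf f v l = 0) (j l : ℕ) : cf ((⇑S.D)^[j] f) v l = 0 := by
  induction j generalizing l with
  | zero => exact h l
  | succ j ih => rw [Function.iterate_succ_apply', cf_D, ih, ih, map_zero, zero_add, ite_self]

theorem cf_iterate_D_add {f : R K n} {v : Fin n ⊕ Fin (n - 1)} {d : ℕ}
    (h : ∀ l, d < l → cf f v l = 0) (j : ℕ) :
    cf ((⇑S.D)^[j] f) v (d + j) = cf f v d := by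
  induction j with
  | zero => rfl
  | succ j ih =>
    rw [Function.iterate_succ_apply', cf_D, cf_iterate_D_eq_zero S h j (by omega), map_zero,
      zero_add, if_neg (by omega), ← add_assoc, Nat.add_sub_cancel, ih]

theorem isLinearPoly_D {f : R K n} (hf : IsLinearPoly f) : IsLinearPoly (S.D f) := by
  rw [hf.eq_C_add_sum, map_add, map_sum, S.hD_C]
  refine (isLinearPoly_C _).add (IsLinearPoly.sum _ fun ⟨v, k⟩ _ => ?_)
  rw [Derivation.leibniz, smul_eq_mul, smul_eq_mul, S.hD_C, S.hD_X, mul_comm (X _)]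
  exact (isLinearPoly_C_mul_X _ _).add (isLinearPoly_C_mul_X _ _)

theorem xOnly_D {f : R K n} (hf : IsLinearPoly f) (hx : xOnly f) : xOnly (S.D f) := by
  rintro ⟨v, k⟩ hw
  have h := (S.isLinearPoly_D hf).cf_ne_zero_of_mem_vars hw
  rw [cf_D] at h
  by_cases h0 : cf f v k = 0
  · rw [h0, map_zero, zero_add, ite_ne_left_iff] at h
    exact hx (v, k - 1) (mem_vars_of_cf_ne_zero h.2.symm)
  · exact hx _ (mem_vars_of_cf_ne_zero h0)

theorem isLinearPoly_iterate_D {f : R K n} (hf : IsLinearPoly f) (j : ℕ) :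
    IsLinearPoly ((⇑S.D)^[j] f) := by
  induction j with
  | zero => exact hf
  | succ j ih => rw [Function.iterate_succ_apply']; exact S.isLinearPoly_D ih

theorem xOnly_iterate_D {f : R K n} (hf : IsLinearPoly f) (hx : xOnly f) (j : ℕ) :
    xOnly ((⇑S.D)^[j] f) := by
  induction j with
  | zero => exact hx
  | succ j ih =>
    rw [Function.iterate_succ_apply']
    exact S.xOnly_D (S.isLinearPoly_iterate_D hf j) ih

theorem inXV_iterate_D_of_le {f : R K n} (hl : IsLinearPoly f) (hx : xOnly f) {c j : ℕ}
    (hc : S.inXV ((⇑S.D)^[c] f)) (hj : j ≤ c) : S.inXV ((⇑S.D)^[j] f) := by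
  rintro ⟨v, l⟩ hw
  obtain ⟨i, rfl⟩ := Sum.isLeft_iff.1 (S.xOnly_iterate_D hl hx j _ hw)
  have hne := (S.isLinearPoly_iterate_D hl j).cf_ne_zero_of_mem_vars hw
  obtain ⟨d, hd, htop⟩ := exists_max_cf_ne_zero (f := f) (v := Sum.inl i) (by
    by_contra! h0
    exact hne (S.cf_iterate_D_eq_zero_of_forall h0 j l))
  have hlj : l ≤ d + j := by
    by_contra hlt
    exact hne (S.cf_iterate_D_eq_zero (d := d + 1) htop j (by omega))
  have hdc := hc _ (mem_vars_of_cf_ne_zero ((S.cf_iterate_D_add htop c).trans_ne hd))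
  simp only [Sum.elim_inl] at hdc ⊢
  omega

theorem subst_C (c : K) : S.subst (C c) = C c := aeval_C _ _

theorem subst_X_inl (i : Fin n) (k : ℕ) :
    S.subst (X (Sum.inl i, k)) = (⇑S.D)^[k] (C (S.a i) - S.H i) := aeval_X _ _

theorem subst_X_inr (j : Fin (n - 1)) (k : ℕ) :
    S.subst (X (Sum.inr j, k)) = X (Sum.inr j, k) := aeval_X _ _

theorem subst_D (p : R K n) : S.subst (S.D p) = S.D (S.subst p) := by
  induction p using MvPolynomial.induction_on with
  | C c => rw [S.hD_C, subst_C, subst_C, S.hD_C]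
  | add p q hp hq => rw [map_add, map_add, map_add, map_add, hp, hq]
  | mul_X p w hp =>
    obtain ⟨v | j, k⟩ := w
    · rw [Derivation.leibniz, map_mul, Derivation.leibniz, S.hD_X, map_add, smul_eq_mul,
        smul_eq_mul, smul_eq_mul, smul_eq_mul, map_mul, map_mul, hp, subst_X_inl, subst_X_inl,
        Function.iterate_succ_apply']
    · rw [Derivation.leibniz, map_mul, Derivation.leibniz, S.hD_X, map_add, smul_eq_mul,
        smul_eq_mul, smul_eq_mul, smul_eq_mul, map_mul, map_mul, hp, subst_X_inr, subst_X_inr,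
        S.hD_X]

theorem subst_iterate_D (k : ℕ) (p : R K n) :
    S.subst ((⇑S.D)^[k] p) = (⇑S.D)^[k] (S.subst p) :=
  Function.Commute.iterate_right (f := ⇑S.subst) (fun p => S.subst_D p) k p

theorem subst_of_uOnly {f : R K n} (hu : uOnly f) : S.subst f = f := by
  refine hom_congr_vars (f₂ := RingHom.id _) (RingHom.ext S.subst_C)
    (fun ⟨v, k⟩ hw _ => ?_) rfl
  obtain ⟨j, rfl⟩ := Sum.isRight_iff.1 (hu _ hw)
  exact S.subst_X_inr j k

theorem subst_F (i : Fin n) : S.subst (S.F i) = 0 := by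
  rw [F, map_add, map_sub, subst_C, subst_X_inl, S.subst_of_uOnly (S.H_u i),
    Function.iterate_zero_apply]
  ring

theorem subst_eq_zero_of_mem_span_PSset {f : R K n} (h : f ∈ Ideal.span S.PSset) :
    S.subst f = 0 := by
  refine (Ideal.span_le (I := RingHom.ker (S.subst : R K n →+* R K n))).2 ?_ h
  rintro _ ⟨i, k, -, rfl⟩
  exact (S.subst_iterate_D k _).trans (by rw [subst_F, iterate_map_zero])

theorem iterate_D_F (i : Fin n) (k : ℕ) :
    (⇑S.D)^[k] (S.F i) = X (Sum.inl i, k) - S.subst (X (Sum.inl i, k)) := by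
  have hF : S.F i = X (Sum.inl i, 0) - (C (S.a i) - S.H i) := by rw [F]; ring
  rw [hF, iterate_map_sub, iterate_D_X, zero_add, subst_X_inl]

theorem sub_subst_eq_sum {f : R K n} (hf : IsLinearPoly f) :
    f - S.subst f = ∑ w ∈ f.vars, C (cf f w.1 w.2) * (X w - S.subst (X w)) := by
  conv_lhs => rw [hf.eq_C_add_sum]
  simp only [map_add, map_sum, map_mul, subst_C, mul_sub, Finset.sum_sub_distrib]
  ring

theorem mem_span_PSset_of_subst_eq_zero {f : R K n} (hf : IsLinearPoly f) (hx : xOnly f)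
    (hXV : S.inXV f) (hs : S.subst f = 0) : f ∈ Ideal.span S.PSset := by
  rw [← sub_zero f, ← hs, S.sub_subst_eq_sum hf]
  refine Ideal.sum_mem _ fun ⟨v, k⟩ hw => Ideal.mul_mem_left _ _ (Ideal.subset_span ?_)
  obtain ⟨i, rfl⟩ := Sum.isLeft_iff.1 (hx _ hw)
  exact ⟨i, k, hXV _ hw, (S.iterate_D_F i k).symm⟩

theorem applyOp_zero_left (f : R K n) : S.applyOp 0 f = 0 := by
  simp [applyOp]

theorem applyOp_zero_right (L : Polynomial K) : S.applyOp L 0 = 0 := by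
  simp [applyOp, iterate_map_zero]

theorem applyOp_X_pow (k : ℕ) (f : R K n) : S.applyOp (Polynomial.X ^ k) f = (⇑S.D)^[k] f := by
  simp [applyOp, Polynomial.support_X_pow]

theorem cf_applyOp (L : Polynomial K) (f : R K n) (v : Fin n ⊕ Fin (n - 1)) (k : ℕ) :
    cf (S.applyOp L f) v k = ∑ j ∈ L.support, L.coeff j * cf ((⇑S.D)^[j] f) v k := by
  simp only [applyOp, cf_sum, cf_C_mul]

theorem vars_applyOp_subset (L : Polynomial K) (f : R K n) :
    (S.applyOp L f).vars ⊆ L.support.biUnion fun j => ((⇑S.D)^[j] f).vars := by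
  classical
  refine (vars_sum_subset _ _).trans (Finset.biUnion_mono fun j _ => ?_)
  simpa using vars_mul (C (L.coeff j)) ((⇑S.D)^[j] f)

noncomputable def applyOpLinearMap (f : R K n) : Polynomial K →ₗ[K] R K n :=
  Polynomial.lsum fun k => LinearMap.toSpanSingleton K (R K n) ((⇑S.D)^[k] f)

theorem applyOpLinearMap_apply (f : R K n) (L : Polynomial K) :
    S.applyOpLinearMap f L = S.applyOp L f := by
  simp [applyOpLinearMap, applyOp, Polynomial.sum_def, smul_eq_C_mul]

variable {A : R K n} {ι : Fin n} {κ : ℕ}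

theorem isLead_iterate_D (hl : IsLinearPoly A) (hx : xOnly A) (h : IsLead A (Sum.inl ι, κ))
    (j : ℕ) : IsLead ((⇑S.D)^[j] A) (Sum.inl ι, κ + j) := by
  refine ⟨mem_vars_of_cf_ne_zero ?_, ?_⟩
  · rw [S.cf_iterate_D_add (fun l => h.cf_eq_zero_of_lt ι) j]
    exact hl.cf_ne_zero_of_mem_vars h.1
  rintro ⟨v, l⟩ hw
  obtain ⟨i, rfl⟩ := Sum.isLeft_iff.1 (S.xOnly_iterate_D hl hx j _ hw)
  have hne := (S.isLinearPoly_iterate_D hl j).cf_ne_zero_of_mem_vars hw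
  rw [rkk_inl_le_inl_iff]
  by_cases hi : (ι.rev : ℕ) < i.rev
  · have hvan : ∀ l', κ ≤ l' → cf A (Sum.inl i) l' = 0 := fun l' hl' =>
      h.cf_eq_zero_of_not_rkk_le (w := (Sum.inl i, l')) (by rw [rkk_inl_le_inl_iff]; omega)
    left
    by_contra hle
    exact hne (S.cf_iterate_D_eq_zero hvan j (by omega))
  · have : l < κ + 1 + j := by
      by_contra hle
      exact hne (S.cf_iterate_D_eq_zero (fun l' hl' => h.cf_eq_zero_of_lt i hl') j (by omega))
    omega

theorem isLead_applyOp (hl : IsLinearPoly A) (hx : xOnly A) (h : IsLead A (Sum.inl ι, κ))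
    {L : Polynomial K} (hL : L ≠ 0) :
    IsLead (S.applyOp L A) (Sum.inl ι, κ + L.natDegree) := by
  have hcf : cf (S.applyOp L A) (Sum.inl ι) (κ + L.natDegree) =
      L.leadingCoeff * cf A (Sum.inl ι) κ := by
    rw [cf_applyOp, Finset.sum_eq_single L.natDegree]
    · rw [S.cf_iterate_D_add (fun l => h.cf_eq_zero_of_lt ι) _, Polynomial.leadingCoeff]
    · intro j hj hjd
      have hjd' : j < L.natDegree := (Polynomial.le_natDegree_of_mem_supp j hj).lt_of_ne hjd
      rw [S.cf_iterate_D_eq_zero (fun l hl => h.cf_eq_zero_of_lt ι hl) j (by omega), mul_zero]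
    · exact fun hd => absurd (Polynomial.natDegree_mem_support_of_nonzero hL) hd
  refine ⟨mem_vars_of_cf_ne_zero ?_, fun w hw => ?_⟩
  · rw [hcf]
    exact mul_ne_zero (Polynomial.leadingCoeff_ne_zero.2 hL) (hl.cf_ne_zero_of_mem_vars h.1)
  obtain ⟨j, hj, hwj⟩ := Finset.mem_biUnion.1 (S.vars_applyOp_subset L A hw)
  refine ((S.isLead_iterate_D hl hx h j).2 w hwj).trans (rkk_inl_le_inl_iff.2 ?_)
  rcases (Polynomial.le_natDegree_of_mem_supp j hj).lt_or_eq with hlt | heq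
  · exact Or.inl (by omega)
  · exact Or.inr ⟨by omega, le_rfl⟩

theorem applyOpLinearMap_injective (hl : IsLinearPoly A) (hx : xOnly A)
    (h : IsLead A (Sum.inl ι, κ)) : Function.Injective (S.applyOpLinearMap A) := by
  refine (injective_iff_map_eq_zero _).2 fun L hL => ?_
  by_contra hL0
  have hlead := S.isLead_applyOp hl hx h hL0
  rw [← applyOpLinearMap_apply, hL] at hlead
  exact absurd hlead.1 (by rw [vars_0]; exact Finset.notMem_empty _)

theorem psIdealMem_iterate_D_coOrd (hA : S.PSIdealMem A) (hl : IsLinearPoly A) (hx : xOnly A)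
    (h : IsLead A (Sum.inl ι, κ)) : S.PSIdealMem ((⇑S.D)^[S.coOrd A] A) :=
  Nat.sSup_mem (s := {c | S.PSIdealMem ((⇑S.D)^[c] A)}) ⟨0, hA⟩
    ⟨S.Nn - S.o ι - S.gamT, fun m hm => by
      have hm' := hm.2 _ (S.isLead_iterate_D hl hx h m).1
      simp only [Sum.elim_inl] at hm'
      omega⟩

theorem psIdealMem_iterate_D_of_le_coOrd (hA : S.PSIdealMem A) (hl : IsLinearPoly A)
    (hx : xOnly A) (h : IsLead A (Sum.inl ι, κ)) {j : ℕ} (hj : j ≤ S.coOrd A) :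
    S.PSIdealMem ((⇑S.D)^[j] A) := by
  have hXV := S.inXV_iterate_D_of_le hl hx (S.psIdealMem_iterate_D_coOrd hA hl hx h).2 hj
  refine ⟨S.mem_span_PSset_of_subst_eq_zero (S.isLinearPoly_iterate_D hl j)
    (S.xOnly_iterate_D hl hx j) hXV ?_, hXV⟩
  rw [subst_iterate_D, S.subst_eq_zero_of_mem_span_PSset hA.1, iterate_map_zero]

end

variable {S : Sys K n} {G : Finset (R K n)} {A : R K n} {ι : Fin n} {κ : ℕ}

theorem IDPrimitive.vars_nonempty (hA : S.IDPrimitive A) : A.vars.Nonempty := by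
  rw [Finset.nonempty_iff_ne_empty]
  intro hemp
  have hop : ∀ i, S.opOf A i = 0 := fun i =>
    Finset.sum_eq_zero fun k _ => by
      rw [cf_eq_zero_of_notMem_vars (hemp ▸ Finset.notMem_empty _), map_zero]
  have hdvd : ∀ i, S.leftDvd Polynomial.X (S.opOf A i) := fun i =>
    ⟨0, fun f => by rw [hop, applyOp_zero_left, applyOp_zero_right]⟩
  simpa using hA Polynomial.X hdvd

theorem PSIdealMem.sub_C_mul {f g : R K n} (hf : S.PSIdealMem f) (hg : S.PSIdealMem g) (c : K) :
    S.PSIdealMem (f - C c * g) :=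
  ⟨sub_mem hf.1 (Ideal.mul_mem_left _ _ hg.1), fun w hw =>
    (Finset.mem_union.1 (vars_sub_C_mul_subset f g c hw)).elim (hf.2 w) (hg.2 w)⟩

theorem IsAssocGB.eq_of_isLead (hG : S.IsAssocGB G) {g g' : R K n} (hg : g ∈ G) (hg' : g' ∈ G)
    {v : Vr n} (hv : IsLead g v) (hv' : IsLead g' v) : g = g' := by
  obtain ⟨u, hu, -, hexcl⟩ := hG.2.2.1 g hg
  rw [hu.unique hv] at hexcl
  by_contra hne
  exact hexcl g' hg' (Ne.symm hne) hv'.1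

/-- Reduction modulo `G`: the lead of `f` is cancelled by the element of `G` with the same lead. -/
theorem IsAssocGB.mem_span_G0_of_rkk_le (hG : S.IsAssocGB G) (r : Lex (Bool × Lex (ℕ × ℕ))) :
    ∀ f : R K n, S.PSIdealMem f → IsLinearPoly f → xOnly f → (∀ w ∈ f.vars, rkk w ≤ r) →
      f ∈ Submodule.span K (G0 G : Set (R K n)) := by
  induction r using WellFoundedLT.induction with
  | _ r ih =>
  intro f hf hfl hfx hfr
  by_cases hf0 : f = 0
  · exact hf0 ▸ zero_mem _
  obtain ⟨g, hgG, ⟨v, k⟩, hgv, hfv⟩ := hG.2.2.2 f hf.1 hf.2 hfl hf0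
  obtain ⟨-, hgl, hgXV, hgI⟩ := hG.1 g hgG
  obtain ⟨u, hgu, hg1, -⟩ := hG.2.2.1 g hgG
  rw [hgu.unique hgv] at hg1
  obtain ⟨i, rfl⟩ := Sum.isLeft_iff.1 (hfx _ hfv.1)
  have hgG0 : g ∈ G0 G := mem_G0.2 ⟨hgG, hgv.xOnly⟩
  set f' := f - C (cf f (Sum.inl i) k) * g
  have hf' : f = f' + cf f (Sum.inl i) k • g := by rw [smul_eq_C_mul]; ring
  rw [hf']
  refine add_mem ?_ (Submodule.smul_mem _ _ (Submodule.subset_span hgG0))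
  by_cases hf'0 : f' = 0
  · exact hf'0 ▸ zero_mem _
  have hf'PS : S.PSIdealMem f' := hf.sub_C_mul ⟨hgI, hgXV⟩ _
  have hf'l : IsLinearPoly f' := hfl.sub (hgl.C_mul _)
  obtain ⟨-, -, v', -, hf'v'⟩ := hG.2.2.2 f' hf'PS.1 hf'PS.2 hf'l hf'0
  have hlt := IsLead.rkk_lt_of_mem_vars_sub hfl hgl hfv hgv hg1
  exact ih _ ((hlt v' hf'v'.1).trans_le (hfr _ hfv.1)) f' hf'PS hf'l
    (fun w hw => (Finset.mem_union.1 (vars_sub_C_mul_subset f g _ hw)).elim (hfx w)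
      (hgv.xOnly w)) hf'v'.2

theorem IsAssocGB.mem_span_G0 (hG : S.IsAssocGB G) {f : R K n} (hf : S.PSIdealMem f)
    (hfl : IsLinearPoly f) (hfx : xOnly f) : f ∈ Submodule.span K (G0 G : Set (R K n)) := by
  by_cases hf0 : f = 0
  · exact hf0 ▸ zero_mem _
  obtain ⟨-, -, v, -, hfv⟩ := hG.2.2.2 f hf.1 hf.2 hfl hf0
  exact hG.mem_span_G0_of_rkk_le _ f hf hfl hfx hfv.2

theorem IsAssocGB.span_G0_eq (hG : S.IsAssocGB G) (hA : S.PSIdealMem A) (hl : IsLinearPoly A)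
    (hx : xOnly A) (h : IsLead A (Sum.inl ι, κ)) (hcard : (G0 G).card = S.coOrd A + 1) :
    Submodule.span K (G0 G : Set (R K n)) =
      (Polynomial.degreeLT K (S.coOrd A + 1)).map (S.applyOpLinearMap A) := by
  classical
  refine (Submodule.eq_of_le_of_finrank_le ?_ ?_).symm
  · rw [Polynomial.degreeLT_eq_span_X_pow, Submodule.map_span, Submodule.span_le]
    rintro _ ⟨_, hp, rfl⟩
    obtain ⟨k, hk, rfl⟩ := Finset.mem_image.1 (Finset.mem_coe.1 hp)
    rw [applyOpLinearMap_apply, applyOp_X_pow]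
    exact hG.mem_span_G0 (S.psIdealMem_iterate_D_of_le_coOrd hA hl hx h
      (Nat.lt_succ_iff.1 (Finset.mem_range.1 hk))) (S.isLinearPoly_iterate_D hl k)
      (S.xOnly_iterate_D hl hx k)
  · rw [← (Submodule.equivMapOfInjective _ (S.applyOpLinearMap_injective hl hx h) _).finrank_eq,
      (Polynomial.degreeLTEquiv K _).finrank_eq, Module.finrank_fin_fun, ← hcard]
    exact finrank_span_finset_le_card _

theorem IsAssocGB.exists_applyOp_eq_of_mem_G0 (hG : S.IsAssocGB G) (hA : S.PSIdealMem A)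
    (hl : IsLinearPoly A) (hx : xOnly A) (h : IsLead A (Sum.inl ι, κ))
    (hcard : (G0 G).card = S.coOrd A + 1) {g : R K n} (hg : g ∈ G0 G) :
    ∃ L : Polynomial K, L.natDegree ≤ S.coOrd A ∧ L ≠ 0 ∧ S.applyOp L A = g := by
  have hg' : g ∈ (Polynomial.degreeLT K (S.coOrd A + 1)).map (S.applyOpLinearMap A) :=
    hG.span_G0_eq hA hl hx h hcard ▸ Submodule.subset_span hg
  obtain ⟨L, hL, rfl⟩ := Submodule.mem_map.1 hg'
  have hL0 : L ≠ 0 := by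
    rintro rfl
    exact (hG.1 _ (mem_G0.1 hg).1).1 (map_zero _)
  refine ⟨L, ?_, hL0, (applyOpLinearMap_apply S A L).symm⟩
  exact Nat.lt_succ_iff.1 ((Polynomial.natDegree_lt_iff_degree_lt hL0).2
    (Polynomial.mem_degreeLT.1 hL))

theorem IsAssocGB.eq_of_natDegree_eq (hG : S.IsAssocGB G) (hl : IsLinearPoly A) (hx : xOnly A)
    (h : IsLead A (Sum.inl ι, κ)) {L L' : Polynomial K} (hL : L ≠ 0) (hL' : L' ≠ 0)
    (hg : S.applyOp L A ∈ G) (hg' : S.applyOp L' A ∈ G) (hd : L.natDegree = L'.natDegree) :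
    S.applyOp L A = S.applyOp L' A :=
  hG.eq_of_isLead hg hg' (S.isLead_applyOp hl hx h hL) (hd ▸ S.isLead_applyOp hl hx h hL')

end Sys

theorem statement_8_general {K : Type} [Field K] {n : ℕ} (S : Sys K n) (G : Finset (R K n))
    (hG : S.IsAssocGB G) (A : R K n) (hAlin : IsLinearPoly A)
    (hAx : xOnly A) (hAPS : S.PSIdealMem A) (hAprim : S.IDPrimitive A)
    (hcard : (G0 G).card = S.coOrd A + 1) :
    ∃ Dop : ℕ → Polynomial K, (∀ j ≤ S.coOrd A, (Dop j).natDegree = j) ∧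
      ((G0 G : Finset (R K n)) : Set (R K n)) =
        {g | ∃ j ≤ S.coOrd A, g = S.applyOp (Dop j) A} := by
  obtain ⟨ι, κ, hlead⟩ := exists_isLead_inl hAx hAprim.vars_nonempty
  choose! Lf hLdeg hL0 hLf using fun g (hg : g ∈ G0 G) =>
    hG.exists_applyOp_eq_of_mem_G0 hAPS hAlin hAx hlead hcard hg
  have hinj : Set.InjOn (fun g => (Lf g).natDegree) (G0 G : Set (R K n)) := by
    intro g hg g' hg' hd
    have hmem : ∀ g ∈ G0 G, S.applyOp (Lf g) A ∈ G := fun g hg => (hLf g hg).symm ▸ (mem_G0.1 hg).1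
    simpa only [hLf g hg, hLf g' hg'] using hG.eq_of_natDegree_eq hAlin hAx hlead (hL0 g hg)
      (hL0 g' hg') (hmem g hg) (hmem g' hg') hd
  have hsurj : ∀ j ≤ S.coOrd A, ∃ g ∈ G0 G, (Lf g).natDegree = j := fun j hj =>
    Finset.surjOn_of_injOn_of_card_le (t := Finset.range (S.coOrd A + 1)) _
      (fun g hg => Finset.mem_range.2 (Nat.lt_succ_of_le (hLdeg g hg))) hinj
      (by rw [hcard, Finset.card_range]) (Finset.mem_range.2 (Nat.lt_succ_of_le hj))
  choose! e he hej using hsurj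
  refine ⟨fun j => Lf (e j), hej, Set.ext fun g => ⟨fun hg => ?_, ?_⟩⟩
  · refine ⟨_, hLdeg g hg, ?_⟩
    rw [hLf _ (he _ (hLdeg g hg))]
    exact (hinj (he _ (hLdeg g hg)) hg (hej _ (hLdeg g hg))).symm
  · rintro ⟨j, hj, rfl⟩
    rw [hLf _ (he j hj)]
    exact he j hj

/-- Let `A` be a nonzero linear `ID`-primitive differential polynomial
in `(G₀)` with `|G₀| = c(A) + 1`. Then for `j = 0,1,…,c(A)` there exist differential
operators `𝓓ⱼ ∈ K[∂]` with `deg 𝓓ⱼ = j` such that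
`G₀ = {B₀ = 𝓓₀(A), B₁ = 𝓓₁(A), …, B_{c(A)} = 𝓓_{c(A)}(A)}`. -/
theorem statement_8 {K : Type} [Field K] {n : ℕ} (S : Sys K n) (G : Finset (R K n))
    (hG : S.IsAssocGB G) (A : R K n) (hA0 : A ≠ 0) (hAlin : IsLinearPoly A)
    (hAx : xOnly A) (hAPS : S.PSIdealMem A) (hAprim : S.IDPrimitive A)
    (hcard : (G0 G).card = S.coOrd A + 1) :
    ∃ Dop : ℕ → Polynomial K, (∀ j ≤ S.coOrd A, (Dop j).natDegree = j) ∧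
      ((G0 G : Finset (R K n)) : Set (R K n)) =
        {g | ∃ j ≤ S.coOrd A, g = S.applyOp (Dop j) A} :=
  statement_8_general S G hG A hAlin hAx hAPS hAprim hcard

end DPPE
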